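/- arXiv:2006.00336 — 2 statements merged into one kernel-verified Lean document; each statement's English description precedes it below -/
import Mathlib

section
/- Let K ⊆ C^n, n ≥ 3, be a complex body of revolution with axis L and hyperplane of revolution H = L^⊥. Then for every complex hyperplane Γ through the origin, Γ ∩ K is a C-linear body of revolution; moreover, either Γ = H or Γ ∩ H is a hyperplane of revolution of Γ ∩ K. -/
/-!
Let `L₁ ⊆ Γ` be the projection of the axis `L` onto `Γ` (any complex line of `Γ` if `Γ = Lᗮ`);
then `L₁ᗮ = Γ ∩ Lᗮ` inside `Γ`. The slice of `Γ ∩ K` through `v ∈ L₁` orthogonal to `L₁` lies in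
the slice of `K` through `c = P_L v`, and `v - c` is orthogonal to it. By Pythagoras, a ball of
that slice centred at `c` meets it in a ball centred at `v`, a point, or nothing, so `Γ ∩ K` is a
body of revolution in `Γ` with axis `L₁` and hyperplane of revolution `Γ ∩ Lᗮ`.
-/

open Metric Submodule Pointwise

noncomputable section

abbrev Cn (n : ℕ) := EuclideanSpace ℂ (Fin n)

def IsConvexBody {E : Type*} [NormedAddCommGroup E] [InnerProductSpace ℂ E]
    (K : Set E) : Prop :=
  IsCompact K ∧ Convex ℝ K ∧ (interior K).Nonempty

def CSymmetric {E : Type*} [NormedAddCommGroup E] [InnerProductSpace ℂ E]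
    (K : Set E) : Prop :=
  ∀ c : ℂ, ‖c‖ = 1 → c • K = K

def IsBodyOfRev {E : Type*} [NormedAddCommGroup E] [InnerProductSpace ℂ E]
    (K : Set E) (L : Submodule ℂ E) : Prop :=
  CSymmetric K ∧ IsConvexBody K ∧ Module.finrank ℂ L = 1 ∧
  ∀ v ∈ L, ({x | x - v ∈ Lᗮ} ∩ K = ∅) ∨ (∃ p, {x | x - v ∈ Lᗮ} ∩ K = {p}) ∨
    (∃ r > (0:ℝ), {x | x - v ∈ Lᗮ} ∩ K = {x | x - v ∈ Lᗮ ∧ ‖x - v‖ ≤ r})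

def IsCEllipsoid {E : Type*} [NormedAddCommGroup E] [InnerProductSpace ℂ E]
    (K : Set E) : Prop :=
  ∃ g : E ≃L[ℂ] E, g '' closedBall 0 1 = K

def IsCLinearBodyOfRevAx {E : Type*} [NormedAddCommGroup E] [InnerProductSpace ℂ E]
    (K : Set E) (Lax H : Submodule ℂ E) : Prop :=
  ∃ (f : E ≃L[ℂ] E) (K₀ : Set E) (L₀ : Submodule ℂ E),
    IsBodyOfRev K₀ L₀ ∧ K = f '' K₀ ∧
    Lax = L₀.map ((f : E →L[ℂ] E) : E →ₗ[ℂ] E) ∧ H = L₀ᗮ.map ((f : E →L[ℂ] E) : E →ₗ[ℂ] E)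

def IsCLinearBodyOfRevHyp {E : Type*} [NormedAddCommGroup E] [InnerProductSpace ℂ E]
    (K : Set E) (H : Submodule ℂ E) : Prop :=
  ∃ Lax, IsCLinearBodyOfRevAx K Lax H

def IsCLinearBodyOfRev {E : Type*} [NormedAddCommGroup E] [InnerProductSpace ℂ E]
    (K : Set E) : Prop :=
  ∃ Lax H, IsCLinearBodyOfRevAx K Lax H

open Function Module
open scoped InnerProductSpace

/-- The condition `IsBodyOfRev` imposes on the slice `S ∩ K`, with `c` the centre of `S`. -/
def IsPointOrBallSlice {E : Type*} [NormedAddCommGroup E] (K S : Set E) (c : E) : Prop :=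
  S ∩ K = ∅ ∨ (∃ p, S ∩ K = {p}) ∨ ∃ r > (0 : ℝ), S ∩ K = {x | x ∈ S ∧ ‖x - c‖ ≤ r}

theorem IsPointOrBallSlice.preimage {F E : Type*} [NormedAddCommGroup F] [NormedAddCommGroup E]
    {f : F → E} (hf : Injective f) {K S : Set E} {T : Set F} {c : E} {v : F}
    (hv : v ∈ T) (hTS : Set.MapsTo f T S)
    (hpyth : ∀ x ∈ T, ‖f x - c‖ ^ 2 = ‖x - v‖ ^ 2 + ‖f v - c‖ ^ 2)
    (h : IsPointOrBallSlice K S c) : IsPointOrBallSlice (f ⁻¹' K) T v := by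
  have hmem : ∀ x ∈ T, f x ∈ K ↔ f x ∈ S ∩ K := fun x hx => ⟨fun hK => ⟨hTS hx, hK⟩, And.right⟩
  rcases h with hS | ⟨p, hS⟩ | ⟨r, hr, hS⟩
  · refine Or.inl (Set.eq_empty_of_forall_notMem fun x ⟨hxT, hxK⟩ => ?_)
    simpa [hS] using (hmem x hxT).1 hxK
  · have hsub : (T ∩ f ⁻¹' K).Subsingleton := fun x ⟨hxT, hxK⟩ y ⟨hyT, hyK⟩ => by
      have hx : f x ∈ ({p} : Set E) := hS ▸ (hmem x hxT).1 hxK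
      have hy : f y ∈ ({p} : Set E) := hS ▸ (hmem y hyT).1 hyK
      exact hf (hx.trans hy.symm)
    exact hsub.eq_empty_or_singleton.imp_right Or.inl
  · set δ := ‖f v - c‖
    have hball : ∀ x ∈ T, f x ∈ K ↔ ‖x - v‖ ^ 2 ≤ r ^ 2 - δ ^ 2 := fun x hx => by
      rw [hmem x hx, hS, Set.mem_ofPred_eq, and_iff_right (hTS hx),
        ← sq_le_sq₀ (norm_nonneg _) hr.le, hpyth x hx, le_sub_iff_add_le]
    rcases lt_trichotomy (r ^ 2 - δ ^ 2) 0 with hneg | hzero | hpos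
    · refine Or.inl (Set.eq_empty_of_forall_notMem fun x ⟨hxT, hxK⟩ => ?_)
      have := (hball x hxT).1 hxK
      nlinarith [sq_nonneg ‖x - v‖]
    · refine Or.inr (Or.inl ⟨v, Set.eq_singleton_iff_unique_mem.2 ⟨⟨hv, ?_⟩, ?_⟩⟩)
      · simp [Set.mem_preimage, hball v hv, hzero]
      · rintro x ⟨hxT, hxK⟩
        rw [Set.mem_preimage, hball x hxT, hzero] at hxK
        simpa [sub_eq_zero] using le_antisymm hxK (sq_nonneg _)
    · refine Or.inr (Or.inr ⟨√(r ^ 2 - δ ^ 2), Real.sqrt_pos.2 hpos, Set.ext fun x => ?_⟩)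
      simp only [Set.mem_inter_iff, Set.mem_preimage, Set.mem_ofPred_eq]
      exact and_congr_right fun hx => by rw [hball x hx, Real.le_sqrt (norm_nonneg _) hpos.le]

section Orthogonal

variable {𝕜 E : Type*} [RCLike 𝕜] [NormedAddCommGroup E] [InnerProductSpace 𝕜 E]

theorem Submodule.orthogonal_map_orthogonalProjectionOnto (Γ L : Submodule 𝕜 E)
    [Γ.HasOrthogonalProjection] :
    (L.map (Γ.orthogonalProjectionOnto : E →ₗ[𝕜] Γ))ᗮ = Lᗮ.comap Γ.subtype := by
  ext y
  simp [Submodule.mem_orthogonal, Submodule.inner_starProjection_left_eq_right]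

theorem Submodule.finrank_map_orthogonalProjectionOnto_eq_one {Γ L : Submodule 𝕜 E}
    [Γ.HasOrthogonalProjection] (hL : finrank 𝕜 L = 1) (hLΓ : ¬ L ≤ Γᗮ) :
    finrank 𝕜 (L.map (Γ.orthogonalProjectionOnto : E →ₗ[𝕜] Γ)) = 1 := by
  have : FiniteDimensional 𝕜 L := Module.finite_of_finrank_eq_succ hL
  refine le_antisymm (hL ▸ Submodule.finrank_map_le _ _)
    (Nat.one_le_iff_ne_zero.2 fun h0 => hLΓ ?_)
  rw [Submodule.finrank_eq_zero, ← LinearMap.le_ker_iff_map] at h0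
  exact Γ.ker_orthogonalProjectionOnto ▸ h0

end Orthogonal

section Bodies

variable {E F : Type*} [NormedAddCommGroup E] [InnerProductSpace ℂ E]
  [NormedAddCommGroup F] [InnerProductSpace ℂ F]

theorem CSymmetric.preimage {K : Set E} (hK : CSymmetric K) (f : F →ₗ[ℂ] E) :
    CSymmetric (f ⁻¹' K) := fun c hc => by
  rw [← IsUnit.preimage_smul_set f (Ne.isUnit (by rintro rfl; simp at hc)), hK c hc]

theorem CSymmetric.zero_mem_interior {K : Set E} (hs : CSymmetric K) (hb : IsConvexBody K) :
    0 ∈ interior K := by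
  obtain ⟨p, hp⟩ := hb.2.2
  have hneg : -p ∈ interior K := by
    rw [← hs (-1) (by simp), interior_smul₀ (by norm_num : (-1 : ℂ) ≠ 0)]
    exact ⟨p, hp, by simp⟩
  simpa using hb.2.1.interior hp hneg (by norm_num : (0 : ℝ) ≤ 1 / 2)
    (by norm_num : (0 : ℝ) ≤ 1 / 2) (by norm_num)

theorem IsConvexBody.preimage [FiniteDimensional ℂ F] {K : Set E} (hb : IsConvexBody K)
    (h0 : 0 ∈ interior K) (f : F →ₗᵢ[ℂ] E) : IsConvexBody (f ⁻¹' K) :=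
  ⟨f.isometry.isClosedEmbedding.isCompact_preimage hb.1,
    hb.2.1.linear_preimage (f.toLinearMap.restrictScalars ℝ),
    ⟨0, preimage_interior_subset_interior_preimage f.continuous (by simpa using h0)⟩⟩

theorem IsBodyOfRev.isCLinearBodyOfRevAx {K : Set E} {L : Submodule ℂ E}
    (hK : IsBodyOfRev K L) : IsCLinearBodyOfRevAx K L Lᗮ :=
  ⟨.refl ℂ E, K, L, hK, by simp, by ext; simp, by ext; simp⟩

theorem IsBodyOfRev.preimage_subtype [FiniteDimensional ℂ E] {K : Set E} {L : Submodule ℂ E}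
    (hK : IsBodyOfRev K L) {Γ : Submodule ℂ E} {L₁ : Submodule ℂ Γ}
    (hL₁ : finrank ℂ L₁ = 1) (hperp : L₁ᗮ ≤ Lᗮ.comap Γ.subtype) :
    IsBodyOfRev ((↑) ⁻¹' K : Set Γ) L₁ := by
  obtain ⟨hsym, hbody, -, hslice⟩ := hK
  refine ⟨hsym.preimage Γ.subtype, hbody.preimage (hsym.zero_mem_interior hbody) Γ.subtypeₗᵢ,
    hL₁, fun v hv => ?_⟩
  set c := L.starProjection v
  have hvc : (v : E) - c ∈ Lᗮ := L.sub_starProjection_mem_orthogonal v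
  refine IsPointOrBallSlice.preimage Subtype.val_injective (by simp) (fun x hx => ?_)
    (fun x hx => ?_) (hslice c (L.starProjection_apply_mem v))
  · simpa using Lᗮ.add_mem (hperp hx) hvc
  · have hxv : ⟪((x - v : Γ) : E), v⟫_ℂ = 0 :=
      (Submodule.inner_left_of_mem_orthogonal hv hx : ⟪x - v, v⟫_ℂ = 0)
    have hxc : ⟪((x - v : Γ) : E), c⟫_ℂ = 0 :=
      Submodule.inner_left_of_mem_orthogonal (L.starProjection_apply_mem v) (hperp hx)
    have := norm_add_sq_eq_norm_sq_add_norm_sq_of_inner_eq_zero _ _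
      (by rw [inner_sub_right, hxv, hxc, sub_zero] : ⟪((x - v : Γ) : E), (v : E) - c⟫_ℂ = 0)
    simp only [Submodule.coe_sub, sub_add_sub_cancel, ← sq] at this
    exact this

end Bodies

/-- Every complex hyperplane section of a complex body of revolution in ℂⁿ,
n ≥ 3, is a C-linear body of revolution; moreover, if `H = Lᗮ` is the hyperplane
of revolution, either `Γ = H` or `Γ ∩ H` is a hyperplane of revolution of `Γ ∩ K`. -/
theorem stmt5 {n : ℕ} (hn : 3 ≤ n) (K : Set (Cn n)) (L : Submodule ℂ (Cn n))
    (hK : IsBodyOfRev K L)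
    (Γ : Submodule ℂ (Cn n)) (hΓ : Module.finrank ℂ Γ = n - 1) :
    (@IsCLinearBodyOfRev ↥Γ (Submodule.normedAddCommGroup Γ)
        (Submodule.innerProductSpace Γ) ((↑) ⁻¹' K)) ∧
      (Γ = Lᗮ ∨
        @IsCLinearBodyOfRevHyp ↥Γ (Submodule.normedAddCommGroup Γ)
          (Submodule.innerProductSpace Γ) ((↑) ⁻¹' K) (Lᗮ.comap Γ.subtype)) := by
  have hL : finrank ℂ L = 1 := hK.2.2.1
  by_cases hΓL : Γ = Lᗮ
  · obtain ⟨b, hb⟩ : ∃ b : Γ, b ≠ 0 :=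
      finrank_pos_iff_exists_ne_zero.1 (by rw [hΓ]; omega)
    have hbody := hK.preimage_subtype (finrank_span_singleton hb)
      fun y _ => show (y : Cn n) ∈ Lᗮ from hΓL ▸ y.2
    exact ⟨⟨_, _, hbody.isCLinearBodyOfRevAx⟩, .inl hΓL⟩
  · have hLperp : finrank ℂ Lᗮ = n - 1 := by
      have := L.finrank_add_finrank_orthogonal
      rw [finrank_euclideanSpace_fin, hL] at this
      omega
    have hLΓ : ¬ L ≤ Γᗮ := fun h => hΓL <| Submodule.eq_of_le_of_finrank_eq
      (by simpa using Submodule.orthogonal_le h) (hΓ.trans hLperp.symm)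
    have hperp := Γ.orthogonal_map_orthogonalProjectionOnto L
    have hbody := hK.preimage_subtype
      (Submodule.finrank_map_orthogonalProjectionOnto_eq_one hL hLΓ) hperp.le
    exact ⟨⟨_, _, hbody.isCLinearBodyOfRevAx⟩, .inr ⟨_, hperp ▸ hbody.isCLinearBodyOfRevAx⟩⟩
end
end

section
/- Let K ⊆ C^n, n ≥ 3, be a complex body of revolution with axis of revolution L. If there exists a complex hyperplane Γ through the origin containing L such that Γ ∩ K is a complex ellipsoid, then K itself is a complex ellipsoid. -/
/-!
The sections of `K` orthogonal to the axis `L` through interior points are balls centred on `L`;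
shrinking towards `0` and passing to the limit, whether `v + w ∈ K` (`v ∈ L`, `w ⊥ L`) depends
only on `v` and `‖w‖`. On `Γ` the gauge `‖g⁻¹ ·‖` of the ellipsoid `Γ ∩ K` is therefore invariant
under `w ↦ -w`, and the parallelogram law makes it Pythagorean:
`‖g⁻¹ (v + w)‖² = ‖g⁻¹ v‖² + ‖g⁻¹ w‖²`. As `n ≥ 3`, `Γ` contains a unit vector `w₁ ⊥ L`; moving
the orthogonal part of any `x` to `‖x - Px‖ • w₁ ∈ Γ` shows, for a unit vector `u ∈ L`,
`K = {x | ‖g⁻¹ u‖² ‖Px‖² + ‖g⁻¹ w₁‖² ‖x - Px‖² ≤ 1}`, which is an ellipsoid.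
-/

open Metric Submodule Pointwise

noncomputable section

namespace IsBodyOfRev

variable {E : Type*} [NormedAddCommGroup E] [InnerProductSpace ℂ E] {K : Set E}
  {L : Submodule ℂ E} {v w w' : E}

theorem zero_mem_interior (hK : IsBodyOfRev K L) : (0 : E) ∈ interior K := by
  obtain ⟨hsym, ⟨-, hconv, x, hx⟩, -⟩ := hK
  have hnegx : -x ∈ interior K := by
    rw [← hsym (-1) (by simp), interior_smul₀ (by norm_num)]
    exact ⟨x, hx, by simp⟩
  simpa using hconv.interior hx hnegx (by norm_num : (0 : ℝ) ≤ 1 / 2)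
    (by norm_num : (0 : ℝ) ≤ 1 / 2) (by norm_num)

theorem add_mem_of_norm_le_of_mem_interior (hK : IsBodyOfRev K L) (hv : v ∈ L) (hw : w ∈ Lᗮ)
    (hw' : w' ∈ Lᗮ) (hle : ‖w'‖ ≤ ‖w‖) (hx : v + w ∈ interior K) : v + w' ∈ K := by
  rcases eq_or_ne w 0 with rfl | hw0
  · obtain rfl : w' = 0 := norm_le_zero_iff.1 (by simpa using hle)
    exact interior_subset hx
  -- An interior point shares its section with a second point, so the section is a ball.
  obtain ⟨t, htK, ht⟩ : ∃ t : ℝ, v + t • w ∈ K ∧ 1 < t := by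
    have hcont : Continuous fun t : ℝ => v + t • w := by fun_prop
    have := (hcont.tendsto 1).eventually (isOpen_interior.mem_nhds (by simpa using hx))
    exact ((this.filter_mono (nhdsWithin_le_nhds (s := Set.Ioi 1))).and
      self_mem_nhdsWithin).exists.imp fun _ h => ⟨interior_subset h.1, h.2⟩
  have hsec {z : E} (hz : z ∈ Lᗮ) : v + z ∈ {x | x - v ∈ Lᗮ} := by simpa using hz
  rcases hK.2.2.2 v hv with hemp | ⟨p, hp⟩ | ⟨r, -, hball⟩
  · exact absurd (hemp ▸ ⟨hsec hw, interior_subset hx⟩ : v + w ∈ (∅ : Set E)) id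
  · have h1 : v + w ∈ ({p} : Set E) := hp ▸ ⟨hsec hw, interior_subset hx⟩
    have h2 : v + t • w ∈ ({p} : Set E) := hp ▸ ⟨hsec (Lᗮ.smul_of_tower_mem t hw), htK⟩
    have : (t - 1) • w = 0 := by
      rw [sub_smul, one_smul, ← add_sub_add_left_eq_sub (t • w) w v, h1, h2, sub_self]
    exact absurd this (smul_ne_zero (sub_ne_zero.2 ht.ne') hw0)
  · have h1 : v + w ∈ {x | x - v ∈ Lᗮ ∧ ‖x - v‖ ≤ r} := hball ▸ ⟨hsec hw, interior_subset hx⟩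
    have h2 : v + w' ∈ {x | x - v ∈ Lᗮ ∧ ‖x - v‖ ≤ r} := by
      simp only [Set.mem_ofPred_eq, add_sub_cancel_left] at h1 ⊢
      exact ⟨hw', hle.trans h1.2⟩
    exact (hball.symm ▸ h2 : v + w' ∈ {x | x - v ∈ Lᗮ} ∩ K).2

theorem add_mem_of_norm_le (hK : IsBodyOfRev K L) (hv : v ∈ L) (hw : w ∈ Lᗮ) (hw' : w' ∈ Lᗮ)
    (hle : ‖w'‖ ≤ ‖w‖) (hx : v + w ∈ K) : v + w' ∈ K := by
  have hshrink : Set.Ioo (0 : ℝ) 1 ⊆ {l : ℝ | l • (v + w') ∈ K} := by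
    intro l ⟨hl0, hl1⟩
    have hint : l • v + l • w ∈ interior K := by
      simpa [smul_add] using hK.2.1.2.1.combo_self_interior_mem_interior hx hK.zero_mem_interior
        hl0.le (sub_pos.2 hl1) (add_sub_cancel l 1)
    rw [Set.mem_ofPred_eq, smul_add]
    refine hK.add_mem_of_norm_le_of_mem_interior (L.smul_of_tower_mem l hv)
      (Lᗮ.smul_of_tower_mem l hw) (Lᗮ.smul_of_tower_mem l hw') ?_ hint
    rw [norm_smul, norm_smul]
    exact mul_le_mul_of_nonneg_left hle (norm_nonneg l)
  have hclosed : IsClosed {l : ℝ | l • (v + w') ∈ K} :=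
    hK.2.1.1.isClosed.preimage (by fun_prop)
  have := hclosed.closure_subset_iff.2 hshrink
  rw [closure_Ioo zero_ne_one] at this
  simpa using this (Set.right_mem_Icc.2 zero_le_one)

theorem add_mem_iff_of_norm_eq (hK : IsBodyOfRev K L) (hv : v ∈ L) (hw : w ∈ Lᗮ)
    (hw' : w' ∈ Lᗮ) (heq : ‖w'‖ = ‖w‖) : v + w' ∈ K ↔ v + w ∈ K :=
  ⟨hK.add_mem_of_norm_le hv hw' hw heq.ge, hK.add_mem_of_norm_le hv hw hw' heq.le⟩

end IsBodyOfRev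

section Ellipsoid

variable {E : Type*} [NormedAddCommGroup E] [InnerProductSpace ℂ E] [FiniteDimensional ℂ E]

theorem isCEllipsoid_setOf_norm_le_one (T : E →ₗ[ℂ] E) (hT : Function.Injective T) :
    IsCEllipsoid {x | ‖T x‖ ≤ 1} := by
  refine ⟨(LinearEquiv.ofInjectiveEndo T hT).toContinuousLinearEquiv.symm, ?_⟩
  rw [ContinuousLinearEquiv.image_symm_eq_preimage]
  ext x
  simp

theorem isCEllipsoid_of_mem_iff (L : Submodule ℂ E) {K : Set E} {A B : ℝ} (hA : 0 < A)
    (hB : 0 < B) (hK : ∀ x, x ∈ K ↔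
      A ^ 2 * ‖L.starProjection x‖ ^ 2 + B ^ 2 * ‖x - L.starProjection x‖ ^ 2 ≤ 1) :
    IsCEllipsoid K := by
  set P := L.starProjection
  let T : E →ₗ[ℂ] E := (A : ℂ) • P.toLinearMap + (B : ℂ) • (LinearMap.id - P.toLinearMap)
  have hT x : ‖T x‖ ^ 2 = A ^ 2 * ‖P x‖ ^ 2 + B ^ 2 * ‖x - P x‖ ^ 2 := by
    have horth : inner ℂ ((A : ℂ) • P x) ((B : ℂ) • (x - P x)) = 0 :=
      Submodule.inner_right_of_mem_orthogonal (L.smul_mem _ (L.starProjection_apply_mem x))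
        (Lᗮ.smul_mem _ (L.sub_starProjection_mem_orthogonal x))
    simp only [T, LinearMap.add_apply, LinearMap.smul_apply, LinearMap.sub_apply,
      LinearMap.id_apply, ContinuousLinearMap.coe_coe]
    rw [norm_add_sq (𝕜 := ℂ), horth, map_zero, mul_zero, add_zero, norm_smul, norm_smul,
      Complex.norm_real, Complex.norm_real, Real.norm_of_nonneg hA.le,
      Real.norm_of_nonneg hB.le]
    ring
  have hinj : Function.Injective T := by
    refine (injective_iff_map_eq_zero T).2 fun x hx => ?_
    have h := hT x
    rw [hx, norm_zero, zero_pow two_ne_zero] at h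
    obtain ⟨hPx, hxPx⟩ := (add_eq_zero_iff_of_nonneg (by positivity) (by positivity)).1 h.symm
    simp only [mul_eq_zero, pow_eq_zero_iff two_ne_zero, hA.ne', hB.ne', norm_eq_zero,
      false_or] at hPx hxPx
    rwa [hPx, sub_zero] at hxPx
  convert isCEllipsoid_setOf_norm_le_one T hinj
  ext x
  rw [hK, Set.mem_ofPred_eq, ← hT, sq_le_one_iff₀ (norm_nonneg _)]

end Ellipsoid

theorem Submodule.exists_norm_eq_one_mem {𝕜 E : Type*} [RCLike 𝕜] [NormedAddCommGroup E]
    [NormedSpace 𝕜 E] {S : Submodule 𝕜 E} (hS : S ≠ ⊥) : ∃ u ∈ S, ‖u‖ = 1 := by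
  obtain ⟨x, hxS, hx0⟩ := S.exists_mem_ne_zero_of_ne_bot hS
  exact ⟨(‖x‖⁻¹ : 𝕜) • x, S.smul_mem _ hxS, norm_smul_inv_norm hx0⟩

section UnitVectors

variable {𝕜 E : Type*} [RCLike 𝕜] [NormedAddCommGroup E] [InnerProductSpace 𝕜 E]

theorem Submodule.exists_norm_eq_one_eq_span_singleton {L : Submodule 𝕜 E}
    (hL : Module.finrank 𝕜 L = 1) : ∃ u, ‖u‖ = 1 ∧ L = 𝕜 ∙ u := by
  obtain ⟨u, huL, hu⟩ := L.exists_norm_eq_one_mem (by rintro rfl; simp at hL)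
  exact ⟨u, hu, eq_span_singleton_of_mem_of_finrank_eq_one hL huL
    (norm_ne_zero_iff.1 (by simp [hu]))⟩

theorem Submodule.exists_norm_eq_one_mem_inf_orthogonal {L Γ : Submodule 𝕜 E}
    [FiniteDimensional 𝕜 Γ] (hLΓ : L ≤ Γ) (hlt : Module.finrank 𝕜 L < Module.finrank 𝕜 Γ) :
    ∃ w ∈ Γ, w ∈ Lᗮ ∧ ‖w‖ = 1 := by
  have hpos : 0 < Module.finrank 𝕜 ↥(Lᗮ ⊓ Γ) := by
    have := Submodule.finrank_add_inf_finrank_orthogonal hLΓ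
    omega
  obtain ⟨w, hw, hw1⟩ := exists_norm_eq_one_mem (S := Lᗮ ⊓ Γ) fun h => by
    rw [h, finrank_bot] at hpos
    exact hpos.ne rfl
  exact ⟨w, hw.2, hw.1, hw1⟩

end UnitVectors

theorem norm_le_norm_of_forall_smul_norm_le_one {F : Type*} [NormedAddCommGroup F]
    [NormedSpace ℝ F] {a b : F} (h : ∀ t : ℝ, 0 < t → ‖t • a‖ ≤ 1 → ‖t • b‖ ≤ 1) :
    ‖b‖ ≤ ‖a‖ := by
  refine le_of_forall_gt_imp_ge_of_dense fun r hr => ?_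
  have hr0 : 0 < r := (norm_nonneg a).trans_lt hr
  have hb := h r⁻¹ (inv_pos.2 hr0) (by
    rw [norm_smul, Real.norm_of_nonneg (inv_nonneg.2 hr0.le), inv_mul_le_one₀ hr0]
    exact hr.le)
  rwa [norm_smul, Real.norm_of_nonneg (inv_nonneg.2 hr0.le), inv_mul_le_one₀ hr0] at hb

namespace IsBodyOfRev

variable {E F : Type*} [NormedAddCommGroup E] [InnerProductSpace ℂ E] [NormedAddCommGroup F]
  {K : Set E} {L Γ : Submodule ℂ E}

theorem norm_apply_le_of_norm_le [NormedSpace ℂ F] {T : Γ →ₗ[ℂ] F} (hK : IsBodyOfRev K L) (hT : ∀ y : Γ, (y : E) ∈ K ↔ ‖T y‖ ≤ 1)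
    {y y' : Γ} {v w w' : E} (hv : v ∈ L) (hw : w ∈ Lᗮ) (hw' : w' ∈ Lᗮ) (hle : ‖w'‖ ≤ ‖w‖)
    (hy : (y : E) = v + w) (hy' : (y' : E) = v + w') : ‖T y'‖ ≤ ‖T y‖ := by
  refine norm_le_norm_of_forall_smul_norm_le_one fun t _ hty => ?_
  rw [← LinearMap.map_smul_of_tower] at hty ⊢
  refine (hT _).1 ?_
  have hmem := (hT _).2 hty
  rw [Submodule.coe_smul_of_tower, hy, smul_add] at hmem
  rw [Submodule.coe_smul_of_tower, hy', smul_add]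
  refine hK.add_mem_of_norm_le (L.smul_of_tower_mem t hv) (Lᗮ.smul_of_tower_mem t hw)
    (Lᗮ.smul_of_tower_mem t hw') ?_ hmem
  rw [norm_smul, norm_smul]
  exact mul_le_mul_of_nonneg_left hle (norm_nonneg t)

variable [InnerProductSpace ℂ F] {T : Γ →ₗ[ℂ] F}

theorem norm_apply_add_sq (hK : IsBodyOfRev K L) (hT : ∀ y : Γ, (y : E) ∈ K ↔ ‖T y‖ ≤ 1)
    {y₁ y₂ : Γ} (h₁ : (y₁ : E) ∈ L) (h₂ : (y₂ : E) ∈ Lᗮ) :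
    ‖T (y₁ + y₂)‖ ^ 2 = ‖T y₁‖ ^ 2 + ‖T y₂‖ ^ 2 := by
  have h₂' : -(y₂ : E) ∈ Lᗮ := Lᗮ.neg_mem h₂
  have hrefl : ‖T (y₁ - y₂)‖ = ‖T (y₁ + y₂)‖ := by
    have hsub : ((y₁ - y₂ : Γ) : E) = y₁ + -y₂ := by simp [sub_eq_add_neg]
    exact le_antisymm
      (hK.norm_apply_le_of_norm_le hT h₁ h₂ h₂' (norm_neg _).le rfl hsub)
      (hK.norm_apply_le_of_norm_le hT h₁ h₂' h₂ (norm_neg _).ge hsub rfl)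
  have hpar := parallelogram_law_with_norm ℂ (T y₁) (T y₂)
  rw [← map_add, ← map_sub, hrefl] at hpar
  linear_combination hpar / 2

theorem mem_iff_quadratic_le_one {u w : E} (hK : IsBodyOfRev K (ℂ ∙ u))
    (hT : ∀ y : Γ, (y : E) ∈ K ↔ ‖T y‖ ≤ 1) (hu : ‖u‖ = 1) (huΓ : u ∈ Γ) (hwΓ : w ∈ Γ)
    (hwL : w ∈ (ℂ ∙ u)ᗮ) (hw : ‖w‖ = 1) (x : E) :
    x ∈ K ↔ ‖T ⟨u, huΓ⟩‖ ^ 2 * ‖(ℂ ∙ u).starProjection x‖ ^ 2 +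
      ‖T ⟨w, hwΓ⟩‖ ^ 2 * ‖x - (ℂ ∙ u).starProjection x‖ ^ 2 ≤ 1 := by
  set P := (ℂ ∙ u).starProjection
  have huL : u ∈ ℂ ∙ u := Submodule.mem_span_singleton_self u
  have hPx : P x = inner ℂ u x • u := starProjection_unit_singleton ℂ hu x
  have hρw : ‖(‖x - P x‖ : ℂ) • w‖ = ‖x - P x‖ := by simp [norm_smul, hw]
  -- The point of `Γ` on the same section of `K` as `x`, at the same distance from the axis.
  set y : Γ := inner ℂ u x • ⟨u, huΓ⟩ + (‖x - P x‖ : ℂ) • ⟨w, hwΓ⟩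
  have hy : (y : E) = P x + (‖x - P x‖ : ℂ) • w := by simp [y, hPx]
  have hpyth : ‖T y‖ ^ 2 = _ := hK.norm_apply_add_sq hT
    (by rw [Submodule.coe_smul]; exact Submodule.smul_mem _ _ huL)
    (by rw [Submodule.coe_smul]; exact Submodule.smul_mem _ _ hwL)
  calc x ∈ K ↔ P x + (x - P x) ∈ K := by rw [add_sub_cancel]
    _ ↔ P x + (‖x - P x‖ : ℂ) • w ∈ K :=
        (hK.add_mem_iff_of_norm_eq ((ℂ ∙ u).starProjection_apply_mem x)
          ((ℂ ∙ u).sub_starProjection_mem_orthogonal x) (Submodule.smul_mem _ _ hwL) hρw).symm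
    _ ↔ ‖T y‖ ^ 2 ≤ 1 := by rw [← hy, hT, sq_le_one_iff₀ (norm_nonneg _)]
    _ ↔ _ := by
        rw [hpyth, map_smul, map_smul, norm_smul, norm_smul, Complex.norm_real,
          Real.norm_of_nonneg (norm_nonneg _), mul_pow, mul_pow, mul_comm (‖inner ℂ u x‖ ^ 2),
          mul_comm (‖x - P x‖ ^ 2), hPx, norm_smul, hu, mul_one]

end IsBodyOfRev

/-- If a complex body of revolution `K ⊆ ℂⁿ`, n ≥ 3, with axis `L` has a complex
hyperplane section through `L` which is a complex ellipsoid, then `K` is a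
complex ellipsoid. -/
theorem stmt6 {n : ℕ} (hn : 3 ≤ n) (K : Set (Cn n)) (L : Submodule ℂ (Cn n))
    (hK : IsBodyOfRev K L)
    (Γ : Submodule ℂ (Cn n)) (hΓ : Module.finrank ℂ Γ = n - 1) (hLΓ : L ≤ Γ)
    (hsec : @IsCEllipsoid ↥Γ (Submodule.normedAddCommGroup Γ)
      (Submodule.innerProductSpace Γ) ((↑) ⁻¹' K)) :
    IsCEllipsoid K := by
  obtain ⟨g, hg⟩ := hsec
  set T : Γ →ₗ[ℂ] Cn n := Γ.subtype ∘ₗ g.symm.toLinearMap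
  have hT (y : Γ) : (y : Cn n) ∈ K ↔ ‖T y‖ ≤ 1 := by
    rw [← Set.mem_preimage (f := ((↑) : Γ → Cn n)), ← hg, g.image_eq_preimage_symm]
    simp [T]
  have hTinj : Function.Injective T := Γ.subtype_injective.comp g.symm.injective
  clear_value T
  obtain ⟨u, hu, rfl⟩ := Submodule.exists_norm_eq_one_eq_span_singleton hK.2.2.1
  obtain ⟨w, hwΓ, hwL, hw⟩ := Submodule.exists_norm_eq_one_mem_inf_orthogonal hLΓ
    (by rw [hK.2.2.1, hΓ]; omega)
  have huΓ : u ∈ Γ := hLΓ (Submodule.mem_span_singleton_self u)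
  have hpos {z : Cn n} (hz : z ∈ Γ) (hz1 : ‖z‖ = 1) : 0 < ‖T ⟨z, hz⟩‖ := by
    rw [norm_pos_iff, ne_eq, map_eq_zero_iff T hTinj, ← Submodule.coe_eq_zero]
    exact norm_ne_zero_iff.1 (by simp [hz1])
  exact isCEllipsoid_of_mem_iff (ℂ ∙ u) (hpos huΓ hu) (hpos hwΓ hw)
    (hK.mem_iff_quadratic_le_one hT hu huΓ hwΓ hwL hw)
end
end
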